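/- arXiv:2212.13628 — 3 statements merged into one kernel-verified Lean document; each statement's English description precedes it below -/
import Mathlib

section
/- Linear independence of signature functionals. Fix T > 0. Let A' be a finite set of words over the alphabet {0,1} and let (c_α)_{α∈A'} be real numbers such that Σ_{α∈A'} c_α S_α(Y_u) = 0 for every u ∈ [0,T] and every Lipschitz path Y_u of length u. Then c_α = 0 for every α ∈ A'. -/
/-!
Words are stored reversed, so the head of a word is the letter integrated last. Suppose
`∑ c ℓ * S_ℓ(y, u)` vanishes for all Lipschitz `y` and `u ∈ [0, T]`. At `u = 0` only the empty
word survives, so its coefficient is zero. To peel off a head letter, continue a path `z` past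
`u₀ < T` affinely with slope `μ`: on `(u₀, T)` the derivative of the vanishing sum is
`F₀ + μ F₁`, where `F_a` is the combination of the tails of the words with head `a`; by
continuity `F₀ + μ F₁ = 0` at `u₀` for the original path `z`, and `μ = 0, 1` separate the two.
Continuity in `u₀` covers `u₀ = T`, and induction on the word finishes.
-/
open Filter Set Topology MeasureTheory

noncomputable section

/-- Iterated Riemann–Stieltjes signature integral of a (Lipschitz) path `y`, recursing on
the *last* letter of the word (the word is given in reversed order):
`dy^0_s = ds` (letter `false`) and `dy^1_s = y'(s) ds` (letter `true`). -/
noncomputable def sigLAux (y : ℝ → ℝ) : List Bool → ℝ → ℝ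
  | [], _ => 1
  | a :: rest, u => ∫ s in (0:ℝ)..u, sigLAux y rest s * (if a then deriv y s else 1)

/-- The signature functional `S_α(Y_u)` of the time-augmented Lipschitz path `y` on `[0,u]`. -/
noncomputable def sigL (α : List Bool) (y : ℝ → ℝ) (u : ℝ) : ℝ := sigLAux y α.reverse u
/-- A globally Lipschitz function, encoding a Lipschitz path. -/
def IsLip (y : ℝ → ℝ) : Prop := ∃ C : NNReal, LipschitzWith C y

def Finset.consPreimage {α : Type*} (B : Finset (List α)) (a : α) : Finset (List α) :=
  B.preimage (List.cons a) List.cons_injective.injOn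

theorem Finset.sum_eq_ite_nil_add_sum_consPreimage {α M : Type*} [Fintype α] [DecidableEq α]
    [AddCommMonoid M] (B : Finset (List α)) (g : List α → M) :
    ∑ ℓ ∈ B, g ℓ = (if [] ∈ B then g [] else 0) + ∑ a, ∑ m ∈ B.consPreimage a, g (a :: m) := by
  classical
  simp only [Finset.consPreimage, Finset.sum_preimage', Finset.sum_filter]
  rw [Finset.sum_comm, ← Finset.sum_ite_eq' B [] g, ← Finset.sum_add_distrib]
  refine Finset.sum_congr rfl fun ℓ _ => ?_
  cases ℓ <;> simp [eq_comm]

lemma IsLip.intervalIntegrable_mul_deriv {y f : ℝ → ℝ} (hy : IsLip y) (hf : Continuous f)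
    (u v : ℝ) : IntervalIntegrable (fun s => f s * deriv y s) volume u v := by
  obtain ⟨C, hy⟩ := hy
  exact hy.lipschitzOnWith.absolutelyContinuousOnInterval.intervalIntegrable_deriv.continuousOn_mul
    hf.continuousOn

lemma IsLip.continuous_sigLAux {y : ℝ → ℝ} (hy : IsLip y) (ℓ : List Bool) :
    Continuous (sigLAux y ℓ) := by
  induction ℓ with
  | nil => exact continuous_const
  | cons a r ih =>
    refine intervalIntegral.continuous_primitive (fun u v => ?_) 0
    cases a
    · simpa using ih.intervalIntegrable u v
    · simpa using hy.intervalIntegrable_mul_deriv ih u v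

lemma IsLip.hasDerivAt_sigLAux_cons {y : ℝ → ℝ} (hy : IsLip y) (a : Bool) (r : List Bool)
    {u : ℝ} (hcd : ContinuousAt (deriv y) u) :
    HasDerivAt (sigLAux y (a :: r)) (sigLAux y r u * (if a then deriv y u else 1)) u := by
  have hr := hy.continuous_sigLAux r
  refine intervalIntegral.integral_hasDerivAt_right ?_ ?_ ?_ <;> cases a
  · simpa using hr.intervalIntegrable 0 u
  · simpa using hy.intervalIntegrable_mul_deriv hr 0 u
  · simpa using hr.aestronglyMeasurable.stronglyMeasurableAtFilter
  · exact (hr.aestronglyMeasurable.mul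
      (measurable_deriv y).aestronglyMeasurable).stronglyMeasurableAtFilter
  · simpa using hr.continuousAt
  · exact hr.continuousAt.mul hcd

lemma sigLAux_eqOn_of_eqOn_Iic {y z : ℝ → ℝ} {u₀ : ℝ} (hyz : EqOn y z (Iic u₀))
    (ℓ : List Bool) : EqOn (sigLAux y ℓ) (sigLAux z ℓ) (Icc 0 u₀) := by
  induction ℓ with
  | nil => exact fun _ _ => rfl
  | cons a r ih =>
    intro s hs
    refine intervalIntegral.integral_congr_ae ?_
    filter_upwards [compl_mem_ae_iff.2 (measure_singleton (μ := volume) u₀)] with t htu ht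
    rw [uIoc_of_le hs.1] at ht
    have htu : t < u₀ := (ht.2.trans hs.2).lt_of_ne htu
    have hd : deriv y t = deriv z t := EventuallyEq.deriv_eq <|
      eventually_of_mem (Iio_mem_nhds htu) fun _ hx => hyz (Iio_subset_Iic_self hx)
    rw [ih ⟨ht.1.le, ht.2.trans hs.2⟩, hd]

def extendAffine (z : ℝ → ℝ) (u₀ μ : ℝ) (s : ℝ) : ℝ := z (min s u₀) + μ * (max s u₀ - u₀)

lemma IsLip.extendAffine {z : ℝ → ℝ} (hz : IsLip z) (u₀ μ : ℝ) : IsLip (extendAffine z u₀ μ) :=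
  let ⟨_, hz⟩ := hz
  ⟨_, (hz.comp (LipschitzWith.id.min_const u₀)).add
    ((lipschitzWith_smul μ).comp ((LipschitzWith.id.max_const u₀).sub (LipschitzWith.const u₀)))⟩

lemma extendAffine_eqOn_Iic (z : ℝ → ℝ) (u₀ μ : ℝ) : EqOn (extendAffine z u₀ μ) z (Iic u₀) := by
  intro s (hs : s ≤ u₀)
  simp [extendAffine, hs]

lemma deriv_extendAffine_eventuallyEq (z : ℝ → ℝ) {u₀ μ u : ℝ} (hu : u₀ < u) :
    deriv (extendAffine z u₀ μ) =ᶠ[𝓝 u] fun _ => μ := by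
  filter_upwards [Ioi_mem_nhds hu] with v hv
  have hline : extendAffine z u₀ μ =ᶠ[𝓝 v] fun s => z u₀ + μ * (s - u₀) := by
    filter_upwards [Ioi_mem_nhds hv] with s (hs : u₀ < s)
    simp [extendAffine, hs.le]
  rw [hline.deriv_eq]
  simp

def sigSum (B : Finset (List Bool)) (c : List Bool → ℝ) (y : ℝ → ℝ) (u : ℝ) : ℝ :=
  ∑ ℓ ∈ B, c ℓ * sigLAux y ℓ u

lemma IsLip.continuous_sigSum {y : ℝ → ℝ} (hy : IsLip y) (B : Finset (List Bool))
    (c : List Bool → ℝ) : Continuous (sigSum B c y) :=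
  continuous_finsetSum B fun ℓ _ => continuous_const.mul (hy.continuous_sigLAux ℓ)

lemma sigSum_zero (B : Finset (List Bool)) (c : List Bool → ℝ) (y : ℝ → ℝ) :
    sigSum B c y 0 = if [] ∈ B then c [] else 0 := by
  simp [sigSum, Finset.sum_eq_ite_nil_add_sum_consPreimage B, sigLAux]

lemma IsLip.hasDerivAt_sigSum {y : ℝ → ℝ} (hy : IsLip y) (B : Finset (List Bool))
    (c : List Bool → ℝ) {u : ℝ} (hcd : ContinuousAt (deriv y) u) :
    HasDerivAt (sigSum B c y)
      (sigSum (B.consPreimage false) (fun m => c (false :: m)) y u +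
        deriv y u * sigSum (B.consPreimage true) (fun m => c (true :: m)) y u) u := by
  have hsplit : sigSum B c y = fun v => (if [] ∈ B then c [] else 0) +
      ∑ a, ∑ m ∈ B.consPreimage a, c (a :: m) * sigLAux y (a :: m) v :=
    funext fun v => by
      rw [sigSum, Finset.sum_eq_ite_nil_add_sum_consPreimage]
      simp only [sigLAux.eq_1, mul_one]
  rw [hsplit]
  refine ((HasDerivAt.fun_sum fun a _ => HasDerivAt.fun_sum fun m _ =>
    (hy.hasDerivAt_sigLAux_cons a m hcd).const_mul (c (a :: m))).const_add _).congr_deriv ?_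
  simp only [sigSum, Fintype.sum_bool, Finset.mul_sum, Bool.false_eq_true, if_true, if_false,
    mul_one]
  rw [add_comm]
  congr 1
  exact Finset.sum_congr rfl fun _ _ => by ring

lemma sigSum_eq_of_eqOn_Iic {y z : ℝ → ℝ} {u₀ : ℝ} (hyz : EqOn y z (Iic u₀)) (hu₀ : 0 ≤ u₀)
    (B : Finset (List Bool)) (c : List Bool → ℝ) : sigSum B c y u₀ = sigSum B c z u₀ :=
  Finset.sum_congr rfl fun ℓ _ => by rw [sigLAux_eqOn_of_eqOn_Iic hyz ℓ ⟨hu₀, le_rfl⟩]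

def SigSumVanishes (T : ℝ) (B : Finset (List Bool)) (c : List Bool → ℝ) : Prop :=
  ∀ u ∈ Icc 0 T, ∀ y, IsLip y → sigSum B c y u = 0

namespace SigSumVanishes

variable {T : ℝ} {B : Finset (List Bool)} {c : List Bool → ℝ}

lemma coeff_nil (h : SigSumVanishes T B c) (hT : 0 ≤ T) (hB : [] ∈ B) : c [] = 0 := by
  simpa [sigSum_zero, hB] using h 0 ⟨le_rfl, hT⟩ 0 ⟨0, LipschitzWith.const 0⟩

lemma sigSum_consPreimage_false_add_mul_true (h : SigSumVanishes T B c) {u₀ : ℝ}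
    (hu₀ : u₀ ∈ Ico 0 T) {z : ℝ → ℝ} (hz : IsLip z) (μ : ℝ) :
    sigSum (B.consPreimage false) (fun m => c (false :: m)) z u₀ +
      μ * sigSum (B.consPreimage true) (fun m => c (true :: m)) z u₀ = 0 := by
  set y := extendAffine z u₀ μ
  have hy : IsLip y := hz.extendAffine u₀ μ
  have hyz : EqOn y z (Iic u₀) := extendAffine_eqOn_Iic z u₀ μ
  set G : ℝ → ℝ := fun u => sigSum (B.consPreimage false) (fun m => c (false :: m)) y u +
    μ * sigSum (B.consPreimage true) (fun m => c (true :: m)) y u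
  have hG : Continuous G :=
    (hy.continuous_sigSum _ _).add (continuous_const.mul (hy.continuous_sigSum _ _))
  have hG_zero : EqOn G 0 (Ioo u₀ T) := by
    intro u hu
    have hderiv_y := deriv_extendAffine_eventuallyEq z (μ := μ) hu.1
    have hderiv := hy.hasDerivAt_sigSum B c hderiv_y.continuousAt
    rw [hderiv_y.eq_of_nhds] at hderiv
    have hloc : sigSum B c y =ᶠ[𝓝 u] fun _ => 0 :=
      eventually_of_mem (isOpen_Ioo.mem_nhds ⟨hu₀.1.trans_lt hu.1, hu.2⟩) fun v hv =>
        h v (Ioo_subset_Icc_self hv) y hy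
    exact hderiv.unique ((hasDerivAt_const u 0).congr_of_eventuallyEq hloc)
  have hGu₀ : G u₀ = 0 := by
    refine hG_zero.closure hG continuous_const ?_
    rw [closure_Ioo hu₀.2.ne]
    exact ⟨le_rfl, hu₀.2.le⟩
  simpa only [G, sigSum_eq_of_eqOn_Iic hyz hu₀.1] using hGu₀

lemma consPreimage (h : SigSumVanishes T B c) (hT : 0 < T) (a : Bool) :
    SigSumVanishes T (B.consPreimage a) (fun m => c (a :: m)) := by
  have hIco : ∀ u ∈ Ico 0 T, ∀ z, IsLip z →
      sigSum (B.consPreimage a) (fun m => c (a :: m)) z u = 0 := by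
    intro u hu z hz
    have h0 := h.sigSum_consPreimage_false_add_mul_true hu hz 0
    have h1 := h.sigSum_consPreimage_false_add_mul_true hu hz 1
    cases a <;> linarith
  intro u hu z hz
  have hclosure := EqOn.closure (fun u hu => hIco u hu z hz) (hz.continuous_sigSum _ _)
    continuous_const
  rw [closure_Ico hT.ne] at hclosure
  exact hclosure hu

theorem coeff_eq_zero (h : SigSumVanishes T B c) (hT : 0 < T) {ℓ : List Bool} (hℓ : ℓ ∈ B) :
    c ℓ = 0 := by
  induction ℓ generalizing B c with
  | nil => exact h.coeff_nil hT.le hℓ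
  | cons a r ih => exact ih (h.consPreimage hT a) (Finset.mem_preimage.2 hℓ)

end SigSumVanishes

/-- **Linear independence of signature functionals.**
If a finite linear combination of signature functionals vanishes on every Lipschitz path
of every length `u ∈ [0,T]`, then all coefficients vanish. -/
theorem signature_linear_independence (T : ℝ) (hT : 0 < T)
    (A : Finset (List Bool)) (c : List Bool → ℝ)
    (h : ∀ u ∈ Set.Icc (0:ℝ) T, ∀ y : ℝ → ℝ, IsLip y →
      ∑ α ∈ A, c α * sigL α y u = 0) :
    ∀ α ∈ A, c α = 0 := by
  intro α hα
  have hrev : SigSumVanishes T (A.map ⟨List.reverse, List.reverse_injective⟩)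
      (fun ℓ => c ℓ.reverse) := by
    intro u hu y hy
    simpa [sigSum, sigL] using h u hu y hy
  simpa using hrev.coeff_eq_zero hT (Finset.mem_map_of_mem _ hα)
end
end

section
/- Linear independence of signature functionals ending in 1 at the horizon. Fix T > 0. Let A' be a finite set of words over {0,1} each of which ends with the letter 1, and let (c_α)_{α∈A'} be real numbers such that Σ_{α∈A'} c_α S_α(Y_T) = 0 for every Lipschitz path Y_T of length T. Then c_α = 0 for every α ∈ A'. -/
open Filter Set Topology MeasureTheory

noncomputable section

/-!
Reverse the words, so that the recursion of `sigLAux` peels off the first letter. A word ending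
in `1` does not see the path after its last increment, so evaluating the hypothesis on the path
stopped at time `u` shows that `∑ c_w S_w` vanishes on every Lipschitz path at every time
`u ∈ [0, T]`. Continuing a path linearly with slope `l` after time `u` and differentiating in
time gives `∑_{a w ∈ B} c_{a w} S_w λ_a = 0` at time `u`, where `λ_0 = 1` and `λ_1 = l`;
the choices `l = 0` and `l = 1` separate the two first letters, and the relation descends to
shorter words. At time `0` only the empty word survives.
-/

@[simp]
lemma sigLAux_nil (y : ℝ → ℝ) (u : ℝ) : sigLAux y [] u = 1 := rfl

lemma sigLAux_cons (y : ℝ → ℝ) (a : Bool) (w : List Bool) (u : ℝ) :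
    sigLAux y (a :: w) u = ∫ s in (0:ℝ)..u, sigLAux y w s * (if a then deriv y s else 1) := rfl

@[simp]
lemma sigLAux_cons_zero (y : ℝ → ℝ) (a : Bool) (w : List Bool) : sigLAux y (a :: w) 0 = 0 :=
  intervalIntegral.integral_same

lemma sigLAux_congr {y z : ℝ → ℝ} {u : ℝ} (hyz : EqOn y z (Icc 0 u)) :
    ∀ w, EqOn (sigLAux y w) (sigLAux z w) (Icc 0 u)
  | [], _, _ => rfl
  | a :: w, s, hs => by
    have hderiv : EqOn (deriv y) (deriv z) (Ioo 0 u) :=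
      (hyz.mono Ioo_subset_Icc_self).deriv isOpen_Ioo
    simp only [sigLAux_cons, intervalIntegral.integral_of_le hs.1, integral_Ioc_eq_integral_Ioo]
    refine setIntegral_congr_fun measurableSet_Ioo fun t ht => ?_
    have htu : t ∈ Ioo 0 u := ⟨ht.1, ht.2.trans_le hs.2⟩
    simp only [sigLAux_congr hyz w (Ioo_subset_Icc_self htu), hderiv htu]

lemma measurable_letter (y : ℝ → ℝ) (a : Bool) :
    Measurable fun s => if a then deriv y s else 1 := by
  cases a <;> simp [measurable_deriv]

namespace IsLip

variable {y : ℝ → ℝ}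

lemma intervalIntegrable_letter (hy : IsLip y) (a : Bool) (x₁ x₂ : ℝ) :
    IntervalIntegrable (fun s => if a then deriv y s else 1) volume x₁ x₂ := by
  obtain ⟨C, hC⟩ := hy
  cases a
  · simp
  · simpa using hC.lipschitzOnWith.absolutelyContinuousOnInterval.intervalIntegrable_deriv

lemma continuous_sigLAux_s9 (hy : IsLip y) : ∀ w, Continuous (sigLAux y w)
  | [] => continuous_const
  | a :: w => intervalIntegral.continuous_primitive (fun x₁ x₂ =>
      (hy.intervalIntegrable_letter a x₁ x₂).continuousOn_mul
        (hy.continuous_sigLAux_s9 w).continuousOn) 0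

end IsLip

def sigLAuxDeriv (y : ℝ → ℝ) (l : ℝ) : List Bool → ℝ → ℝ
  | [], _ => 0
  | a :: w, s => sigLAux y w s * if a then l else 1

lemma IsLip.continuous_sigLAuxDeriv {y : ℝ → ℝ} (hy : IsLip y) (l : ℝ) :
    ∀ w, Continuous (sigLAuxDeriv y l w)
  | [] => continuous_const
  | _ :: w => (hy.continuous_sigLAux_s9 w).mul continuous_const

lemma IsLip.hasDerivAt_sigLAux {y : ℝ → ℝ} {s l : ℝ} (hy : IsLip y)
    (hl : ∀ᶠ t in 𝓝 s, deriv y t = l) : ∀ w, HasDerivAt (sigLAux y w) (sigLAuxDeriv y l w s) s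
  | [] => hasDerivAt_const s 1
  | a :: w => by
    have hcont := hy.continuous_sigLAux_s9 w
    have hf : (fun t => sigLAux y w t * if a then deriv y t else 1) =ᶠ[𝓝 s]
        fun t => sigLAux y w t * if a then l else 1 := hl.mono fun t ht => by simp only [ht]
    have := intervalIntegral.integral_hasDerivAt_right
      ((hy.intervalIntegrable_letter a 0 s).continuousOn_mul hcont.continuousOn)
      (hcont.measurable.mul (measurable_letter y a)).stronglyMeasurable.stronglyMeasurableAtFilter
      ((hcont.mul continuous_const).continuousAt.congr hf.symm)
    rwa [hf.eq_of_nhds] at this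

/-- With slope `l = 0` this is `y` stopped at time `u`. -/
def linearExtension (y : ℝ → ℝ) (u l : ℝ) (s : ℝ) : ℝ := y (min s u) + l * (max s u - u)

section linearExtension

variable {y : ℝ → ℝ} {u l : ℝ}

lemma IsLip.linearExtension (hy : IsLip y) (u l : ℝ) : IsLip (linearExtension y u l) := by
  obtain ⟨C, hC⟩ := hy
  exact ⟨_, (hC.comp (LipschitzWith.id.min_const u)).add ((lipschitzWith_smul l).comp
    ((LipschitzWith.id.max_const u).sub (LipschitzWith.const u)))⟩

lemma linearExtension_eqOn : EqOn (linearExtension y u l) y (Iic u) := fun s hs => by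
  simp [linearExtension, min_eq_left (mem_Iic.1 hs), max_eq_right (mem_Iic.1 hs)]

lemma deriv_linearExtension_of_lt {s : ℝ} (hs : u < s) : deriv (linearExtension y u l) s = l := by
  have hlin : linearExtension y u l =ᶠ[𝓝 s] fun t => y u + l * (t - u) := by
    filter_upwards [Ioi_mem_nhds hs] with t ht
    simp [linearExtension, min_eq_right (mem_Ioi.1 ht).le, max_eq_left (mem_Ioi.1 ht).le]
  rw [hlin.deriv_eq]
  simp

end linearExtension

lemma sigL_linearExtension_zero {y : ℝ → ℝ} {α : List Bool} {u v : ℝ} (hy : IsLip y)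
    (hα : α.getLast? = some true) (hu : 0 ≤ u) (huv : u ≤ v) :
    sigL α (linearExtension y u 0) v = sigL α y u := by
  obtain ⟨w, hw⟩ := List.head?_eq_some_iff.1 (List.head?_reverse.trans hα)
  set z := linearExtension y u 0
  have hz := hy.linearExtension u 0
  have hint (x₁ x₂ : ℝ) := (hz.intervalIntegrable_letter true x₁ x₂).continuousOn_mul
    (hz.continuous_sigLAux_s9 w).continuousOn
  have htail : ∫ s in u..v, sigLAux z w s * (if true then deriv z s else 1) = 0 := by
    rw [intervalIntegral.integral_of_le huv]
    refine setIntegral_eq_zero_of_forall_eq_zero fun s hs => ?_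
    simp [z, deriv_linearExtension_of_lt hs.1]
  have hagree : EqOn z y (Icc 0 u) := linearExtension_eqOn.mono Icc_subset_Iic_self
  simp only [sigL, hw, sigLAux_cons] at *
  rw [← intervalIntegral.integral_add_adjacent_intervals (hint 0 u) (hint u v), htail, add_zero]
  exact sigLAux_congr hagree (true :: w) ⟨hu, le_rfl⟩

lemma Continuous.eqOn_Icc_of_eqOn_Ioo {α β : Type*} [TopologicalSpace α] [LinearOrder α]
    [OrderTopology α] [DenselyOrdered α] [TopologicalSpace β] [T2Space β] {f g : α → β} {a b : α}
    (hf : Continuous f) (hg : Continuous g) (hab : a ≠ b) (h : EqOn f g (Ioo a b)) :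
    EqOn f g (Icc a b) := by
  simpa [closure_Ioo hab] using h.closure hf hg

lemma sum_mul_sigLAuxDeriv (B : Finset (List Bool)) (c : List Bool → ℝ) (y : ℝ → ℝ) (l s : ℝ) :
    ∑ w ∈ B, c w * sigLAuxDeriv y l w s =
      ∑ w ∈ B.preimage (List.cons false) List.cons_injective.injOn, c (false :: w) * sigLAux y w s +
      l * ∑ w ∈ B.preimage (List.cons true) List.cons_injective.injOn, c (true :: w) * sigLAux y w s := by
  let headTerm (a : Bool) (w : List Bool) : ℝ :=
    if w.head? = some a then c w * sigLAux y w.tail s else 0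
  have hpre (a : Bool) : ∑ w ∈ B.preimage (List.cons a) List.cons_injective.injOn,
      c (a :: w) * sigLAux y w s = ∑ w ∈ B, headTerm a w := by
    refine (Finset.sum_congr rfl fun w _ => by simp [headTerm]).trans
      (Finset.sum_preimage _ _ _ (headTerm a) fun w _ hw => if_neg fun h => hw ?_)
    obtain ⟨t, rfl⟩ := List.head?_eq_some_iff.1 h
    exact ⟨t, rfl⟩
  rw [hpre, hpre, Finset.mul_sum, ← Finset.sum_add_distrib]
  refine Finset.sum_congr rfl fun w _ => ?_
  rcases w with _ | ⟨_ | _, w⟩ <;> simp [headTerm, sigLAuxDeriv]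
  ring

def VanishesOnLipPaths (T : ℝ) (B : Finset (List Bool)) (c : List Bool → ℝ) : Prop :=
  ∀ y, IsLip y → ∀ u ∈ Icc 0 T, ∑ w ∈ B, c w * sigLAux y w u = 0

namespace VanishesOnLipPaths

variable {T : ℝ} {B : Finset (List Bool)} {c : List Bool → ℝ}

lemma sum_sigLAuxDeriv_eq_zero_of_lt (h : VanishesOnLipPaths T B c) (l : ℝ) {y : ℝ → ℝ}
    (hy : IsLip y) {u : ℝ} (hu : u ∈ Ico 0 T) : ∑ w ∈ B, c w * sigLAuxDeriv y l w u = 0 := by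
  set z := linearExtension y u l
  have hz : IsLip z := hy.linearExtension u l
  have hφ : Continuous fun s => ∑ w ∈ B, c w * sigLAuxDeriv z l w s :=
    continuous_finsetSum _ fun w _ => continuous_const.mul (hz.continuous_sigLAuxDeriv l w)
  have hvanish : EqOn (fun s => ∑ w ∈ B, c w * sigLAuxDeriv z l w s) 0 (Ioo u T) := by
    intro s hs
    have hslope : ∀ᶠ t in 𝓝 s, deriv z t = l :=
      eventually_of_mem (Ioi_mem_nhds hs.1) fun t ht => deriv_linearExtension_of_lt ht
    have hderiv : HasDerivAt (fun v => ∑ w ∈ B, c w * sigLAux z w v)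
        (∑ w ∈ B, c w * sigLAuxDeriv z l w s) s :=
      HasDerivAt.fun_sum fun w _ => (hz.hasDerivAt_sigLAux hslope w).const_mul (c w)
    have hconst : (fun v => ∑ w ∈ B, c w * sigLAux z w v) =ᶠ[𝓝 s] fun _ => 0 :=
      eventually_of_mem (Ioo_mem_nhds (hu.1.trans_lt hs.1) hs.2) fun v hv => h z hz v (Ioo_subset_Icc_self hv)
    exact hderiv.unique ((hasDerivAt_const s 0).congr_of_eventuallyEq hconst)
  have hagree : EqOn z y (Icc 0 u) := linearExtension_eqOn.mono Icc_subset_Iic_self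
  refine Eq.trans (Finset.sum_congr rfl fun w _ => ?_)
    (hφ.eqOn_Icc_of_eqOn_Ioo continuous_const hu.2.ne hvanish ⟨le_rfl, hu.2.le⟩)
  rcases w with _ | ⟨a, w⟩
  · rfl
  · simp only [sigLAuxDeriv, sigLAux_congr hagree.symm w ⟨hu.1, le_rfl⟩]

lemma sum_sigLAuxDeriv_eq_zero (hT : 0 < T) (h : VanishesOnLipPaths T B c) (l : ℝ) {y : ℝ → ℝ}
    (hy : IsLip y) {u : ℝ} (hu : u ∈ Icc 0 T) : ∑ w ∈ B, c w * sigLAuxDeriv y l w u = 0 := by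
  rcases hu.2.lt_or_eq with hlt | rfl
  · exact h.sum_sigLAuxDeriv_eq_zero_of_lt l hy ⟨hu.1, hlt⟩
  · refine (Continuous.eqOn_Icc_of_eqOn_Ioo (continuous_finsetSum _ fun w _ =>
      continuous_const.mul (hy.continuous_sigLAuxDeriv l w)) continuous_const hT.ne
      (fun s hs => h.sum_sigLAuxDeriv_eq_zero_of_lt l hy ⟨hs.1.le, hs.2⟩)) ⟨hT.le, le_rfl⟩

lemma preimage_cons (hT : 0 < T) (h : VanishesOnLipPaths T B c) (a : Bool) :
    VanishesOnLipPaths T (B.preimage (List.cons a) List.cons_injective.injOn)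
      (fun w => c (a :: w)) := by
  intro y hy u hu
  have h₀ := h.sum_sigLAuxDeriv_eq_zero hT 0 hy hu
  have h₁ := h.sum_sigLAuxDeriv_eq_zero hT 1 hy hu
  rw [sum_mul_sigLAuxDeriv] at h₀ h₁
  cases a <;> linarith

lemma eq_zero (hT : 0 < T) : ∀ w, ∀ {B c}, VanishesOnLipPaths T B c → w ∈ B → c w = 0
  | [], B, c, h, hw => by
    have := h (fun _ => 0) ⟨0, LipschitzWith.const 0⟩ 0 ⟨le_rfl, hT.le⟩
    rw [Finset.sum_eq_single_of_mem [] hw fun w _ hw => by cases w <;> simp_all] at this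
    simpa using this
  | a :: w, _, _, h, hw => eq_zero hT w (h.preimage_cons hT a) (by simpa using hw)

end VanishesOnLipPaths

/-- **Linear independence of signature functionals ending in `1` at the horizon.**
If a finite linear combination of signature functionals indexed by words ending with the
letter `1` vanishes on every Lipschitz path of length `T`, all coefficients vanish. -/
theorem signature_independence_ending_one (T : ℝ) (hT : 0 < T)
    (A : Finset (List Bool)) (hA : ∀ α ∈ A, α.getLast? = some true)
    (c : List Bool → ℝ)
    (h : ∀ y : ℝ → ℝ, IsLip y → ∑ α ∈ A, c α * sigL α y T = 0) :
    ∀ α ∈ A, c α = 0 := by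
  have hrev : VanishesOnLipPaths T (A.image List.reverse) (fun w => c w.reverse) := by
    intro y hy u hu
    rw [Finset.sum_image List.reverse_injective.injOn, ← h _ (hy.linearExtension u 0)]
    refine Finset.sum_congr rfl fun α hα => ?_
    rw [sigL_linearExtension_zero hy (hA α hα) hu.1 hu.2]
    simp only [List.reverse_reverse, sigL]
  intro α hα
  simpa using hrev.eq_zero hT α.reverse (Finset.mem_image_of_mem _ hα)
end
end

section
/- Chen's identity and real analyticity of signature functionals. Let X_s be a Lipschitz path of length s and Y_u a Lipschitz path of length u. Then for every word α over {0,1}: S_α(X_s ⊕ Y_u) = Σ_{β γ = α} S_β(X_s) · S_γ(Y_u), where the sum runs over all decompositions of α as a concatenation of two (possibly empty) words β and γ. In particular, since Δ_γ S_{βγ} = S_β for the Dupire derivatives, the right-hand side is the functional Taylor series of S_α at X_s evaluated at Y_u, so every signature functional is real analytic on Lipschitz paths with infinite radius of convergence. -/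
open Filter Set Topology MeasureTheory

noncomputable section

open Filter Topology

/-- Concatenation `X ⊕ Y` of a path `x` of length `s` with a path `y`:
`r ↦ x_{r∧s} + y_{(r−s)⁺} − y_0`. -/
def concatF (s : ℝ) (x y : ℝ → ℝ) : ℝ → ℝ :=
  fun r => x (min r s) + y (max (r - s) 0) - y 0

/-! Induct on the word, appending one letter `a` at a time. Split the
outer integral `∫_0^{s+t}` defining `S_{αa}(X ⊕ Y)` at `s`: on `[0, s]` the concatenation is `X`,
which gives `S_{αa}(X)`; on `[s, s+t]` it is a translate of `Y`, so the induction hypothesis turns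
the integrand into `∑ S_β(X) S_γ(Y_τ) dy^a_τ`, whose integral is `∑ S_β(X) S_{γa}(Y)`. Lipschitz
paths are absolutely continuous, which makes every integrand integrable. The Taylor partial sums
are eventually equal to the Chen sum, since only suffixes `γ` of `α` have a nonzero coefficient. -/

open Finset

theorem IsLip.intervalIntegrable_deriv {y : ℝ → ℝ} (hy : IsLip y) (p q : ℝ) :
    IntervalIntegrable (deriv y) volume p q :=
  let ⟨_, hC⟩ := hy
  hC.lipschitzOnWith.absolutelyContinuousOnInterval.intervalIntegrable_deriv

theorem IsLip.intervalIntegrable_letter_s19 {y : ℝ → ℝ} (hy : IsLip y) (a : Bool) (p q : ℝ) :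
    IntervalIntegrable (fun r => if a then deriv y r else 1) volume p q := by
  cases a
  · exact intervalIntegrable_const
  · exact hy.intervalIntegrable_deriv p q

theorem isLip_concatF {x y : ℝ → ℝ} (hx : IsLip x) (hy : IsLip y) (s : ℝ) :
    IsLip (concatF s x y) :=
  let ⟨_, hx⟩ := hx
  let ⟨_, hy⟩ := hy
  ⟨_, ((hx.comp (LipschitzWith.id.min_const s)).add
    (hy.comp ((LipschitzWith.id.sub (LipschitzWith.const s)).max_const 0))).sub
    (LipschitzWith.const (y 0))⟩

theorem concatF_eqOn_Iic (s : ℝ) (x y : ℝ → ℝ) : EqOn (concatF s x y) x (Iic s) := by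
  intro r (hr : r ≤ s)
  simp [concatF, hr]

theorem deriv_concatF_of_lt {s r : ℝ} (x y : ℝ → ℝ) (hr : s < r) :
    deriv (concatF s x y) r = deriv y (r - s) := by
  have hshift : concatF s x y =ᶠ[𝓝 r] fun w => (x s - y 0) + y (w - s) :=
    Filter.eventuallyEq_of_mem (Ioi_mem_nhds hr) fun w (hw : s < w) => by
      simp only [concatF, min_eq_right hw.le, max_eq_left (sub_nonneg.2 hw.le)]
      ring
  rw [hshift.deriv_eq, deriv_const_add, deriv_comp_sub_const]

theorem deriv_eq_of_eqOn_Iic {f g : ℝ → ℝ} {s r : ℝ} (h : EqOn f g (Iic s)) (hr : r < s) :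
    deriv f r = deriv g r :=
  ((h.mono Set.Iio_subset_Iic_self).eventuallyEq_of_mem (Iio_mem_nhds hr)).deriv_eq

@[simp]
theorem sigL_nil (y : ℝ → ℝ) (u : ℝ) : sigL [] y u = 1 := rfl

theorem sigL_append_singleton (α : List Bool) (a : Bool) (y : ℝ → ℝ) (u : ℝ) :
    sigL (α ++ [a]) y u = ∫ r in (0 : ℝ)..u, sigL α y r * (if a then deriv y r else 1) := by
  simp [sigL, sigLAux]

theorem IsLip.continuous_sigL {y : ℝ → ℝ} (hy : IsLip y) (α : List Bool) :
    Continuous (sigL α y) := by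
  induction α using List.reverseRecOn with
  | nil => exact continuous_const
  | append_singleton α a ih =>
    simp_rw [funext (sigL_append_singleton α a y)]
    exact intervalIntegral.continuous_primitive
      (fun p q => (hy.intervalIntegrable_letter_s19 a p q).continuousOn_mul ih.continuousOn) 0

theorem IsLip.intervalIntegrable_sigL_mul_letter {y : ℝ → ℝ} (hy : IsLip y) (α : List Bool)
    (a : Bool) (p q : ℝ) :
    IntervalIntegrable (fun r => sigL α y r * (if a then deriv y r else 1)) volume p q :=
  (hy.intervalIntegrable_letter_s19 a p q).continuousOn_mul (hy.continuous_sigL α).continuousOn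

theorem sigL_congr_of_eqOn_Iic {z x : ℝ → ℝ} {s : ℝ} (hs : 0 ≤ s) (h : EqOn z x (Iic s))
    (α : List Bool) {r : ℝ} (hr : r ≤ s) : sigL α z r = sigL α x r := by
  induction α using List.reverseRecOn generalizing r with
  | nil => rfl
  | append_singleton α a ih =>
    rw [sigL_append_singleton, sigL_append_singleton]
    refine intervalIntegral.integral_congr_ae ?_
    -- `deriv z` and `deriv x` may differ at `s` itself
    filter_upwards [volume.ae_ne s] with r' hne hmem
    have hr' : r' ≤ s := by
      rcases Set.mem_uIoc.1 hmem with ⟨_, h'⟩ | ⟨_, h'⟩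
      · exact h'.trans hr
      · exact h'.trans hs
    rw [ih hr', deriv_eq_of_eqOn_Iic h (hr'.lt_of_ne hne)]

theorem Finset.sum_range_take_drop_append_singleton {ι M : Type*} [AddCommMonoid M]
    (F : List ι → List ι → M) (α : List ι) (a : ι) :
    ∑ j ∈ range ((α ++ [a]).length + 1), F ((α ++ [a]).take j) ((α ++ [a]).drop j) =
      ∑ j ∈ range (α.length + 1), F (α.take j) (α.drop j ++ [a]) + F (α ++ [a]) [] := by
  rw [List.length_append, List.length_singleton, sum_range_succ, List.take_of_length_le (by simp),
    List.drop_of_length_le (by simp)]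
  congr 1
  refine sum_congr rfl fun j hj => ?_
  have hj : j ≤ α.length := Nat.lt_succ_iff.1 (mem_range.1 hj)
  rw [List.take_append_of_le_length hj, List.drop_append_of_le_length hj]

theorem sigL_concatF {s t : ℝ} (hs : 0 ≤ s) (ht : 0 ≤ t) {x y : ℝ → ℝ} (hx : IsLip x)
    (hy : IsLip y) (α : List Bool) :
    sigL α (concatF s x y) (s + t) =
      ∑ j ∈ range (α.length + 1), sigL (α.take j) x s * sigL (α.drop j) y t := by
  induction α using List.reverseRecOn generalizing t with
  | nil => simp
  | append_singleton α a ih =>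
    set z := concatF s x y
    have hF := (isLip_concatF hx hy s).intervalIntegrable_sigL_mul_letter α a
    have head : ∫ r in (0 : ℝ)..s, sigL α z r * (if a then deriv z r else 1) =
        sigL (α ++ [a]) x s := by
      rw [← sigL_append_singleton]
      exact sigL_congr_of_eqOn_Iic hs (concatF_eqOn_Iic s x y) _ le_rfl
    have tail : ∫ r in s..s + t, sigL α z r * (if a then deriv z r else 1) =
        ∑ j ∈ range (α.length + 1), sigL (α.take j) x s * sigL (α.drop j ++ [a]) y t := by
      calc ∫ r in s..s + t, sigL α z r * (if a then deriv z r else 1)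
          = ∫ τ in (0 : ℝ)..t, sigL α z (s + τ) * (if a then deriv z (s + τ) else 1) := by
            rw [intervalIntegral.integral_comp_add_left
              (fun r => sigL α z r * (if a then deriv z r else 1)), add_zero]
        _ = ∫ τ in (0 : ℝ)..t, ∑ j ∈ range (α.length + 1),
              sigL (α.take j) x s * (sigL (α.drop j) y τ * (if a then deriv y τ else 1)) := by
            refine intervalIntegral.integral_congr_ae (ae_of_all _ fun τ hτ => ?_)
            have hτ : 0 < τ := (Set.uIoc_of_le ht ▸ hτ).1
            rw [ih hτ.le, deriv_concatF_of_lt x y (lt_add_of_pos_right s hτ),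
              add_sub_cancel_left, sum_mul]
            exact sum_congr rfl fun j _ => mul_assoc _ _ _
        _ = _ := by
            rw [intervalIntegral.integral_finsetSum fun j _ =>
              (hy.intervalIntegrable_sigL_mul_letter _ a 0 t).const_mul _]
            simp_rw [intervalIntegral.integral_const_mul, sigL_append_singleton]
    rw [sigL_append_singleton, ← intervalIntegral.integral_add_adjacent_intervals (hF 0 s)
      (hF s (s + t)), head, tail,
      sum_range_take_drop_append_singleton fun β γ => sigL β x s * sigL γ y t, sigL_nil, mul_one,
      add_comm]

theorem Fintype.sum_ite_eq_ofFn {ι M : Type*} [Fintype ι] [DecidableEq ι] [AddCommMonoid M]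
    (l : List ι) (n : ℕ) (f : List ι → M) :
    ∑ v : Fin n → ι, (if l = List.ofFn v then f (List.ofFn v) else 0) =
      if l.length = n then f l else 0 := by
  split_ifs with h
  · subst h
    have hget (v : Fin l.length → ι) : l = List.ofFn v ↔ l.get = v := by
      rw [← List.ofFn_inj, List.ofFn_get]
    simp_rw [hget, Fintype.sum_ite_eq, List.ofFn_get]
  · exact Finset.sum_eq_zero fun v _ =>
      if_neg fun (hv : l = List.ofFn v) => h (by rw [hv, List.length_ofFn])

theorem Finset.sum_range_ite_le {M : Type*} [AddCommMonoid M] (f : ℕ → M) {N K : ℕ}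
    (h : N ≤ K) : ∑ n ∈ range (K + 1), (if n ≤ N then f n else 0) = ∑ n ∈ range (N + 1), f n := by
  rw [← sum_filter]
  congr 1
  ext n
  simp only [mem_filter, mem_range]
  omega

/-- **Chen's identity and real analyticity of signature functionals.**
For Lipschitz paths `x` of length `s` and `y` of length `u` and every word `α`:
`S_α(X ⊕ Y) = Σ_{βγ=α} S_β(X) S_γ(Y)`. Since `Δ_γ S_{βγ} = S_β`, the right-hand side is
the functional Taylor series of `S_α` at `X` evaluated at `Y`: the partial sums over
words `γ` with `|γ| ≤ K` converge (as `K → ∞`) to `S_α(X ⊕ Y)`, with the coefficient of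
`S_γ(Y)` equal to `S_β(X)` when `α = βγ` and `0` otherwise; so every signature functional
is real analytic with infinite radius of convergence. -/
theorem chen_identity_and_analyticity (s u : ℝ) (hs : 0 ≤ s) (hu : 0 ≤ u)
    (x : ℝ → ℝ) (hx : IsLip x) (y : ℝ → ℝ) (hy : IsLip y)
    (α : List Bool) :
    (sigL α (concatF s x y) (s + u) =
      ∑ j ∈ Finset.range (α.length + 1),
        sigL (List.take j α) x s * sigL (List.drop j α) y u) ∧
    Tendsto (fun K : ℕ =>
        ∑ n ∈ Finset.range (K + 1), ∑ v : Fin n → Bool,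
          (if List.drop (α.length - n) α = List.ofFn v ∧ n ≤ α.length
            then sigL (List.take (α.length - n) α) x s else 0) * sigL (List.ofFn v) y u)
      atTop (𝓝 (sigL α (concatF s x y) (s + u))) := by
  have chen := sigL_concatF hs hu hx hy α
  refine ⟨chen, tendsto_atTop_of_eventually_const fun K (hK : α.length ≤ K) => ?_⟩
  have taylor_term (n : ℕ) : ∑ v : Fin n → Bool,
      (if α.drop (α.length - n) = List.ofFn v ∧ n ≤ α.length
        then sigL (α.take (α.length - n)) x s else 0) * sigL (List.ofFn v) y u =
      if n ≤ α.length then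
        sigL (α.take (α.length - n)) x s * sigL (α.drop (α.length - n)) y u else 0 := by
    by_cases hn : n ≤ α.length
    · have hlen : (α.drop (α.length - n)).length = n := by simp only [List.length_drop]; omega
      simp only [hn, and_true, if_true, ite_zero_mul]
      exact (Fintype.sum_ite_eq_ofFn _ n fun w => _ * sigL w y u).trans (if_pos hlen)
    · simp only [hn, and_false, if_false, zero_mul, sum_const_zero]
  simp_rw [taylor_term, sum_range_ite_le _ hK, chen]
  exact sum_range_reflect (fun j => sigL (α.take j) x s * sigL (α.drop j) y u) _
end
end
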